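/- arXiv:2109.14453 — 4 statements merged into one kernel-verified Lean document; each statement's English description precedes it below -/
import Mathlib

section
/- Let C, C₁, C₂ ⊆ ℝ^d be closed, convex, salient (pointed) cones with C₁ ⊆ C and C₂ ⊆ C. Then the Minkowski sum C₁ + C₂ is closed. -/
/-!
If `A ∩ -B ⊆ {0}`, the compact set `A ∩ sphere 0 1` has positive distance `c` from the closed
set `-B`, so by homogeneity `c * ‖a‖ ≤ ‖a + b‖` for all `a ∈ A`, `b ∈ B`. Hence the part of
`A + B` in a ball comes from bounded, hence compact, pieces of `A` and `B`, and `A + B` is closed.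
For the theorem, salience of `C` gives `C₁ ∩ -C₂ ⊆ C ∩ -C ⊆ {0}`.
-/

open Pointwise Metric Set

section

variable {E : Type*} [NormedAddCommGroup E] [NormedSpace ℝ E] [ProperSpace E] {A B : Set E}

theorem exists_pos_mul_norm_le_norm_add (hA : IsClosed A) (hB : IsClosed B)
    (hAcone : ∀ x ∈ A, ∀ t : ℝ, 0 ≤ t → t • x ∈ A)
    (hBcone : ∀ x ∈ B, ∀ t : ℝ, 0 ≤ t → t • x ∈ B) (hAB : A ∩ -B ⊆ {0}) :
    ∃ c > 0, ∀ a ∈ A, ∀ b ∈ B, c * ‖a‖ ≤ ‖a + b‖ := by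
  have hdisj : Disjoint (A ∩ sphere 0 1) (-B) := Set.disjoint_left.2 fun x hx hxB => by
    have hx0 : x = 0 := hAB ⟨hx.1, hxB⟩
    simpa [hx0] using hx.2
  obtain ⟨r, hr, hsep⟩ :=
    exists_pos_forall_lt_edist ((isCompact_sphere 0 1).inter_left hA) hB.neg hdisj
  refine ⟨r, hr, fun a ha b hb => ?_⟩
  rcases eq_or_ne a 0 with rfl | ha0
  · simp
  have ha_pos : 0 < ‖a‖ := norm_pos_iff.2 ha0
  have ht : 0 ≤ ‖a‖⁻¹ := inv_nonneg.2 ha_pos.le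
  have hsep_a := hsep (‖a‖⁻¹ • a) ⟨hAcone a ha _ ht, by simp [norm_smul, ha0]⟩
    (-(‖a‖⁻¹ • b)) (by simpa using hBcone b hb _ ht)
  rw [edist_nndist, ENNReal.coe_lt_coe, ← NNReal.coe_lt_coe, coe_nndist, dist_eq_norm,
    sub_neg_eq_add, ← smul_add, norm_smul, norm_inv, norm_norm, lt_inv_mul_iff₀ ha_pos] at hsep_a
  linarith

theorem isClosed_add_of_inter_neg_subset_zero (hA : IsClosed A) (hB : IsClosed B)
    (hAcone : ∀ x ∈ A, ∀ t : ℝ, 0 ≤ t → t • x ∈ A)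
    (hBcone : ∀ x ∈ B, ∀ t : ℝ, 0 ≤ t → t • x ∈ B) (hAB : A ∩ -B ⊆ {0}) :
    IsClosed (A + B) := by
  obtain ⟨c, hc, hbound⟩ := exists_pos_mul_norm_le_norm_add hA hB hAcone hBcone hAB
  refine isClosed_of_closure_subset fun z hz => ?_
  set R := ‖z‖ + 1
  set K := (A ∩ closedBall 0 (R / c)) + (B ∩ closedBall 0 (R / c + R))
  have hK : IsCompact K :=
    ((isCompact_closedBall 0 _).inter_left hA).add ((isCompact_closedBall 0 _).inter_left hB)
  have hball_sub : ball 0 R ∩ (A + B) ⊆ K := by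
    rintro _ ⟨hR, a, ha, b, hb, rfl⟩
    rw [mem_ball_zero_iff] at hR
    have ha_le : ‖a‖ ≤ R / c := by
      rw [le_div_iff₀' hc]
      linarith [hbound a ha b hb]
    have hb_le : ‖b‖ ≤ R / c + R := by
      calc ‖b‖ = ‖a + b - a‖ := by rw [add_sub_cancel_left]
        _ ≤ ‖a + b‖ + ‖a‖ := norm_sub_le _ _
        _ ≤ R / c + R := by linarith
    exact ⟨a, ⟨ha, mem_closedBall_zero_iff.2 ha_le⟩, b, ⟨hb, mem_closedBall_zero_iff.2 hb_le⟩, rfl⟩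
  have hzK : z ∈ K := hK.isClosed.closure_subset_iff.2 hball_sub <|
    isOpen_ball.inter_closure ⟨mem_ball_zero_iff.2 (lt_add_one _), hz⟩
  exact add_subset_add inter_subset_left inter_subset_left hzK

end

theorem minkowski_sum_of_cones_closed_general (d : ℕ)
    (C C₁ C₂ : Set (EuclideanSpace ℝ (Fin d)))
    (hCsal : C ∩ (-C) ⊆ {0})
    (hC₁closed : IsClosed C₁)
    (hC₁cone : ∀ x ∈ C₁, ∀ c : ℝ, 0 ≤ c → c • x ∈ C₁)
    (hC₂closed : IsClosed C₂)
    (hC₂cone : ∀ x ∈ C₂, ∀ c : ℝ, 0 ≤ c → c • x ∈ C₂)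
    (h₁ : C₁ ⊆ C) (h₂ : C₂ ⊆ C) :
    IsClosed (C₁ + C₂) :=
  isClosed_add_of_inter_neg_subset_zero hC₁closed hC₂closed hC₁cone hC₂cone
    ((inter_subset_inter h₁ (neg_subset_neg.2 h₂)).trans hCsal)

theorem minkowski_sum_of_cones_closed (d : ℕ)
    (C C₁ C₂ : Set (EuclideanSpace ℝ (Fin d)))
    (hCclosed : IsClosed C) (hCconv : Convex ℝ C)
    (hCcone : ∀ x ∈ C, ∀ c : ℝ, 0 ≤ c → c • x ∈ C)
    (hCsal : C ∩ (-C) ⊆ {0})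
    (hC₁closed : IsClosed C₁) (hC₁conv : Convex ℝ C₁)
    (hC₁cone : ∀ x ∈ C₁, ∀ c : ℝ, 0 ≤ c → c • x ∈ C₁)
    (hC₁sal : C₁ ∩ (-C₁) ⊆ {0})
    (hC₂closed : IsClosed C₂) (hC₂conv : Convex ℝ C₂)
    (hC₂cone : ∀ x ∈ C₂, ∀ c : ℝ, 0 ≤ c → c • x ∈ C₂)
    (hC₂sal : C₂ ∩ (-C₂) ⊆ {0})
    (h₁ : C₁ ⊆ C) (h₂ : C₂ ⊆ C) :
    IsClosed (C₁ + C₂) :=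
  minkowski_sum_of_cones_closed_general d C C₁ C₂ hCsal hC₁closed hC₁cone hC₂closed hC₂cone h₁ h₂
end

section
/- Let a, b ∈ ℝ with b ≥ 0. If the matrix p(α,1) = [[α²+b, (a/2)α],[(a/2)α, (α²+1)/4]] is positive semidefinite for every real α, then for every complex z = α + iβ the Hermitian matrix p(z,1) = [[|z|²+b, (a/2)Re(z)],[(a/2)Re(z), (|z|²+1)/4]] is positive semidefinite. -/
/-!
The real matrix at `α = ‖z‖` has the same diagonal as the complex matrix at `z`, and since
`|Re z| ≤ ‖z‖` its off-diagonal entry dominates. Hence the complex matrix is a real symmetric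
`2 × 2` matrix with nonnegative diagonal and nonnegative determinant, and such a matrix is
positive semidefinite over any `RCLike` field.
-/

open ComplexOrder

lemma two_mul_abs_le_of_sq_le_mul {A C D : ℝ} (hA : 0 ≤ A) (hD : 0 ≤ D) (hC : C ^ 2 ≤ A * D)
    (u v : ℝ) : 2 * |C * u * v| ≤ A * u ^ 2 + D * v ^ 2 := by
  rw [← abs_two, ← abs_mul]
  refine abs_le_of_sq_le_sq ?_ (by positivity)
  calc (2 * (C * u * v)) ^ 2 = 4 * C ^ 2 * (u * v) ^ 2 := by ring
    _ ≤ 4 * (A * D) * (u * v) ^ 2 := by gcongr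
    _ ≤ (A * u ^ 2 + D * v ^ 2) ^ 2 := by nlinarith [sq_nonneg (A * u ^ 2 - D * v ^ 2)]

open RCLike ComplexConjugate Matrix in
lemma posSemidef_fin_two_ofReal {K : Type*} [RCLike K] {A C D : ℝ} (hA : 0 ≤ A) (hD : 0 ≤ D)
    (hC : C ^ 2 ≤ A * D) : (!![(A : K), C; C, D]).PosSemidef := by
  refine .of_dotProduct_mulVec_nonneg ?_ fun x ↦ ?_
  · ext i j; fin_cases i <;> fin_cases j <;> simp
  set w := conj (x 0) * x 1
  have hform : star x ⬝ᵥ !![(A : K), C; C, D] *ᵥ x =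
      ((A * ‖x 0‖ ^ 2 + C * (2 * re w) + D * ‖x 1‖ ^ 2 : ℝ) : K) := calc
    _ = A * (conj (x 0) * x 0) + C * (w + conj w) + D * (conj (x 1) * x 1) := by
      simp only [dotProduct, Pi.star_apply, star_def, mulVec, of_apply, cons_val', cons_val_fin_one,
        Fin.sum_univ_two, cons_val_zero, cons_val_one, map_mul, RingHomCompTriple.comp_apply,
        RingHom.id_apply, w]
      ring
    _ = _ := by rw [RCLike.conj_mul, RCLike.conj_mul, add_conj]; push_cast; ring
  have hw : |C * re w| ≤ |C * ‖x 0‖ * ‖x 1‖| := by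
    rw [abs_mul, mul_assoc, abs_mul, abs_of_nonneg (by positivity : 0 ≤ ‖x 0‖ * ‖x 1‖)]
    gcongr
    simpa [w] using abs_re_le_norm w
  rw [hform, ofReal_nonneg]
  linarith [neg_abs_le (C * re w), two_mul_abs_le_of_sq_le_mul hA hD hC ‖x 0‖ ‖x 1‖]

theorem psd_real_line_implies_psd_complex_general (a b : ℝ)
    (h : ∀ α : ℝ, Matrix.PosSemidef
      (!![α ^ 2 + b, (a / 2) * α; (a / 2) * α, (α ^ 2 + 1) / 4] :
        Matrix (Fin 2) (Fin 2) ℝ)) :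
    ∀ z : ℂ, Matrix.PosSemidef
      (!![((‖z‖ ^ 2 + b : ℝ) : ℂ), (((a / 2) * z.re : ℝ) : ℂ);
          (((a / 2) * z.re : ℝ) : ℂ), (((‖z‖ ^ 2 + 1) / 4 : ℝ) : ℂ)] :
        Matrix (Fin 2) (Fin 2) ℂ) := by
  intro z
  have hM := h ‖z‖
  have hdiag : 0 ≤ ‖z‖ ^ 2 + b := by simpa using hM.diag_nonneg (i := 0)
  have hdet := hM.det_nonneg
  rw [Matrix.det_fin_two_of] at hdet
  have hre : (a / 2 * z.re) ^ 2 ≤ (a / 2 * ‖z‖) ^ 2 := by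
    rw [mul_pow, mul_pow, ← sq_abs z.re]
    gcongr
    exact Complex.abs_re_le_norm z
  have hC : (a / 2 * z.re) ^ 2 ≤ (‖z‖ ^ 2 + b) * ((‖z‖ ^ 2 + 1) / 4) := by linarith
  have hD : 0 ≤ (‖z‖ ^ 2 + 1) / 4 := by positivity
  exact posSemidef_fin_two_ofReal hdiag hD hC

theorem psd_real_line_implies_psd_complex (a b : ℝ) (hb : 0 ≤ b)
    (h : ∀ α : ℝ, Matrix.PosSemidef
      (!![α ^ 2 + b, (a / 2) * α; (a / 2) * α, (α ^ 2 + 1) / 4] :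
        Matrix (Fin 2) (Fin 2) ℝ)) :
    ∀ z : ℂ, Matrix.PosSemidef
      (!![((‖z‖ ^ 2 + b : ℝ) : ℂ), (((a / 2) * z.re : ℝ) : ℂ);
          (((a / 2) * z.re : ℝ) : ℂ), (((‖z‖ ^ 2 + 1) / 4 : ℝ) : ℂ)] :
        Matrix (Fin 2) (Fin 2) ℂ) :=
  psd_real_line_implies_psd_complex_general a b h
end

section
/- The planar set S = S₁ ∪ S₂ ⊆ ℝ², where S₁ = {(a,b) | (b+1−a²)² ≤ 4b} and S₂ = {(a,b) | (b+1−a²)² ≥ 4b, b ≥ 0, a² ≤ b+1}, is convex. -/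
/-!
Writing `r = √b`, one has `(b + 1 - a²)² - 4b = ((r - 1)² - a²)((r + 1)² - a²)`, and from this
`S₁ ∪ S₂ = {(a, b) | 0 ≤ b ∧ |a| ≤ √b + 1}`. This set lies between the graph of a convex function
of `a` and that of a concave function of `b`, hence it is convex.
-/

open Set

theorem convex_setOf_le_of_convexOn_of_concaveOn {𝕜 E F β : Type*} [Semiring 𝕜]
    [PartialOrder 𝕜] [AddCommMonoid E] [AddCommMonoid F] [AddCommMonoid β] [PartialOrder β]
    [IsOrderedAddMonoid β] [Module 𝕜 E] [Module 𝕜 F] [Module 𝕜 β] [PosSMulMono 𝕜 β]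
    {f : E → β} {g : F → β} {s : Set F} (hf : ConvexOn 𝕜 univ f) (hg : ConcaveOn 𝕜 s g) :
    Convex 𝕜 {p : E × F | p.2 ∈ s ∧ f p.1 ≤ g p.2} := by
  rintro ⟨x₁, y₁⟩ ⟨hy₁, h₁⟩ ⟨x₂, y₂⟩ ⟨hy₂, h₂⟩ a b ha hb hab
  refine ⟨hg.1 hy₁ hy₂ ha hb hab, ?_⟩
  calc f (a • x₁ + b • x₂) ≤ a • f x₁ + b • f x₂ := hf.2 trivial trivial ha hb hab
    _ ≤ a • g y₁ + b • g y₂ := add_le_add (smul_le_smul_of_nonneg_left h₁ ha)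
        (smul_le_smul_of_nonneg_left h₂ hb)
    _ ≤ g (a • y₁ + b • y₂) := hg.2 hy₁ hy₂ ha hb hab

lemma sq_le_four_mul_sq_or_iff_abs_le_add_one {a r : ℝ} (hr : 0 ≤ r) :
    ((r ^ 2 + 1 - a ^ 2) ^ 2 ≤ 4 * r ^ 2 ∨
      (4 * r ^ 2 ≤ (r ^ 2 + 1 - a ^ 2) ^ 2 ∧ a ^ 2 ≤ r ^ 2 + 1)) ↔ |a| ≤ r + 1 := by
  have hfactor : (r ^ 2 + 1 - a ^ 2) ^ 2 - 4 * r ^ 2 =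
      ((r - 1) ^ 2 - a ^ 2) * ((r + 1) ^ 2 - a ^ 2) := by ring
  have hsq : (r - 1) ^ 2 ≤ (r + 1) ^ 2 := by nlinarith
  rw [← abs_of_nonneg (by linarith : 0 ≤ r + 1), ← sq_le_sq]
  constructor
  · rintro (h | ⟨-, h⟩)
    · by_contra! ha
      nlinarith [mul_pos (sub_pos.2 (hsq.trans_lt ha)) (sub_pos.2 ha)]
    · nlinarith
  · intro ha
    by_cases ha' : a ^ 2 ≤ (r - 1) ^ 2
    · refine Or.inr ⟨?_, by nlinarith⟩
      nlinarith [mul_nonneg (sub_nonneg.2 ha') (sub_nonneg.2 ha)]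
    · refine Or.inl ?_
      nlinarith [mul_nonpos_of_nonpos_of_nonneg (by linarith : (r - 1) ^ 2 - a ^ 2 ≤ 0)
        (sub_nonneg.2 ha)]

lemma sq_le_four_mul_or_iff_abs_le_sqrt_add_one (a b : ℝ) :
    ((b + 1 - a ^ 2) ^ 2 ≤ 4 * b ∨ (4 * b ≤ (b + 1 - a ^ 2) ^ 2 ∧ 0 ≤ b ∧ a ^ 2 ≤ b + 1)) ↔
      0 ≤ b ∧ |a| ≤ √b + 1 := by
  by_cases hb : 0 ≤ b
  · obtain ⟨r, hr, rfl⟩ : ∃ r, 0 ≤ r ∧ b = r ^ 2 :=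
      ⟨√b, Real.sqrt_nonneg b, (Real.sq_sqrt hb).symm⟩
    simpa only [Real.sqrt_sq hr, hb, true_and] using sq_le_four_mul_sq_or_iff_abs_le_add_one hr
  · have : 4 * b < (b + 1 - a ^ 2) ^ 2 := by nlinarith [sq_nonneg (b + 1 - a ^ 2)]
    simp only [hb, not_le.2 this, false_and, and_false, or_false]

theorem S1_union_S2_convex :
    Convex ℝ ({p : ℝ × ℝ | (p.2 + 1 - p.1 ^ 2) ^ 2 ≤ 4 * p.2} ∪
      {p : ℝ × ℝ | 4 * p.2 ≤ (p.2 + 1 - p.1 ^ 2) ^ 2 ∧ 0 ≤ p.2 ∧ p.1 ^ 2 ≤ p.2 + 1}) := by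
  have hS : {p : ℝ × ℝ | (p.2 + 1 - p.1 ^ 2) ^ 2 ≤ 4 * p.2} ∪
      {p : ℝ × ℝ | 4 * p.2 ≤ (p.2 + 1 - p.1 ^ 2) ^ 2 ∧ 0 ≤ p.2 ∧ p.1 ^ 2 ≤ p.2 + 1} =
      {p : ℝ × ℝ | p.2 ∈ Ici 0 ∧ ‖p.1‖ ≤ √p.2 + 1} := by
    ext ⟨a, b⟩
    simp only [mem_union, mem_ofPred_eq, mem_Ici, Real.norm_eq_abs]
    exact sq_le_four_mul_or_iff_abs_le_sqrt_add_one a b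
  rw [hS]
  exact convex_setOf_le_of_convexOn_of_concaveOn (convexOn_norm convex_univ)
    (Real.strictConcaveOn_sqrt.concaveOn.add_const 1)
end

section
/- Let S = S₁ ∪ S₂ ⊆ ℝ² with S₁ = {(a,b) | (b+1−a²)² ≤ 4b} and S₂ = {(a,b) | (b+1−a²)² ≥ 4b, b ≥ 0, a² ≤ b+1}. Then the singleton {(1,0)} is a face of S, but it is a non-exposed face: the only affine function ℓ vanishing at (1,0) with ℓ ≥ 0 on S is (up to positive scalar) ℓ(a,b) = b, and its zero set on S is the segment {(a,0) | −1 ≤ a ≤ 1}, which strictly contains {(1,0)}. -/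
/-!
Every affine `ℓ ≥ 0` on `S` with `ℓ (1, 0) = 0` must vanish to second order along the boundary
curve `s ↦ (1 + s, s²)` of `S`, which leaves only the multiples of `(a, b) ↦ b`; these vanish on
the whole segment `[-1, 1] × {0}`. On the other hand `{(1, 0)}` is an exposed face (cut out by
`a`) of that segment, which is itself an exposed face (cut out by `b`) of `S`, and faces of
faces are faces.
-/

open Filter Topology

theorem AffineMap.apply_prod_eq {k V : Type*} [CommRing k] [AddCommGroup V] [Module k V]
    (ℓ : k × k →ᵃ[k] V) (p : k × k) :
    ℓ p = p.1 • ℓ.linear (1, 0) + p.2 • ℓ.linear (0, 1) + ℓ 0 := by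
  have hp : p = p.1 • ((1 : k), (0 : k)) + p.2 • ((0 : k), (1 : k)) := by ext <;> simp
  conv_lhs => rw [ℓ.decomp, Pi.add_apply, hp, map_add, map_smul, map_smul]

theorem isExposed_setOf_eq_of_forall_le {𝕜 E : Type*} [Ring 𝕜] [PartialOrder 𝕜]
    [IsOrderedRing 𝕜] [TopologicalSpace 𝕜] [IsTopologicalAddGroup 𝕜] [AddCommGroup E]
    [TopologicalSpace E] [Module 𝕜 E] {A : Set E} (l : StrongDual 𝕜 E) {c : 𝕜}
    (hA : ∀ y ∈ A, c ≤ l y) : IsExposed 𝕜 A {x ∈ A | l x = c} := by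
  rintro ⟨x₀, hx₀A, hx₀c⟩
  refine ⟨-l, Set.ext fun x => ⟨fun ⟨hx, hxc⟩ => ⟨hx, fun y hy => ?_⟩, fun ⟨hx, hmax⟩ => ⟨hx, ?_⟩⟩⟩
  · simpa [hxc] using hA y hy
  · have hx₀x : -l x₀ ≤ -l x := hmax x₀ hx₀A
    rw [hx₀c, neg_le_neg_iff] at hx₀x
    exact le_antisymm hx₀x (hA x hx)

theorem nonneg_of_forall_pos_nonneg_add_mul {a b : ℝ} (h : ∀ s > 0, 0 ≤ a + s * b) : 0 ≤ a := by
  have hlim : Tendsto (fun s : ℝ => a + s * b) (𝓝[>] 0) (𝓝 a) := by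
    refine Tendsto.mono_left ?_ nhdsWithin_le_nhds
    have hcont : Continuous fun s : ℝ => a + s * b := by fun_prop
    simpa using hcont.tendsto 0
  exact ge_of_tendsto hlim (eventually_nhdsWithin_of_forall h)

namespace NonexposedFace

def S : Set (ℝ × ℝ) :=
  {p : ℝ × ℝ | (p.2 + 1 - p.1 ^ 2) ^ 2 ≤ 4 * p.2} ∪
    {p : ℝ × ℝ | 4 * p.2 ≤ (p.2 + 1 - p.1 ^ 2) ^ 2 ∧ 0 ≤ p.2 ∧ p.1 ^ 2 ≤ p.2 + 1}

theorem snd_nonneg_of_mem {p : ℝ × ℝ} (hp : p ∈ S) : 0 ≤ p.2 := by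
  rcases hp with hp | ⟨-, hp, -⟩
  · nlinarith [sq_nonneg (p.2 + 1 - p.1 ^ 2), hp.out]
  · exact hp

theorem mk_zero_mem_iff {a : ℝ} : (a, (0 : ℝ)) ∈ S ↔ -1 ≤ a ∧ a ≤ 1 := by
  simp only [S, Set.mem_union, Set.mem_ofPred_eq, le_refl, true_and, mul_zero, zero_add]
  constructor
  · rintro (h | ⟨-, h⟩) <;> constructor <;> nlinarith [sq_nonneg (a - 1), sq_nonneg (a + 1)]
  · rintro ⟨h₁, h₂⟩
    exact Or.inr ⟨sq_nonneg _, by nlinarith⟩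

theorem one_zero_mem : ((1 : ℝ), (0 : ℝ)) ∈ S := mk_zero_mem_iff.2 (by norm_num)

theorem neg_one_zero_mem : ((-1 : ℝ), (0 : ℝ)) ∈ S := mk_zero_mem_iff.2 (by norm_num)

theorem one_add_sq_mem (s : ℝ) : (1 + s, s ^ 2) ∈ S :=
  Or.inl <| show (s ^ 2 + 1 - (1 + s) ^ 2) ^ 2 ≤ 4 * s ^ 2 from le_of_eq (by ring)

theorem zero_one_mem : ((0 : ℝ), (1 : ℝ)) ∈ S :=
  Or.inl <| by norm_num

theorem sep_snd_eq_zero : {p ∈ S | p.2 = 0} = {p : ℝ × ℝ | p.2 = 0 ∧ -1 ≤ p.1 ∧ p.1 ≤ 1} := by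
  ext ⟨a, b⟩
  constructor
  · rintro ⟨hp, rfl⟩
    exact ⟨rfl, mk_zero_mem_iff.1 hp⟩
  · rintro ⟨rfl, ha⟩
    exact ⟨mk_zero_mem_iff.2 ha, rfl⟩

theorem eq_mul_snd_of_nonneg {ℓ : ℝ × ℝ →ᵃ[ℝ] ℝ} (hℓ : ∀ p ∈ S, 0 ≤ ℓ p) (h₁₀ : ℓ (1, 0) = 0) :
    ∃ c : ℝ, 0 ≤ c ∧ ∀ p : ℝ × ℝ, ℓ p = c * p.2 := by
  set α := ℓ.linear (1, 0)
  set β := ℓ.linear (0, 1)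
  have hℓ_eq (p : ℝ × ℝ) : ℓ p = p.1 * α + p.2 * β + ℓ 0 := ℓ.apply_prod_eq p
  have hℓ₀ : ℓ 0 = -α := by linarith [hℓ_eq (1, 0)]
  have hcurve (s : ℝ) : 0 ≤ s * (α + s * β) := by
    have h := hℓ _ (one_add_sq_mem s)
    rw [hℓ_eq, hℓ₀] at h
    linarith
  have hα_nonneg : 0 ≤ α := nonneg_of_forall_pos_nonneg_add_mul fun s hs =>
    (mul_nonneg_iff_of_pos_left hs).1 (hcurve s)
  have hα_nonpos : 0 ≤ -α := nonneg_of_forall_pos_nonneg_add_mul (b := β) fun s hs =>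
    (mul_nonneg_iff_of_pos_left hs).1 (by linarith [hcurve (-s)])
  have hα : α = 0 := le_antisymm (neg_nonneg.1 hα_nonpos) hα_nonneg
  have hβ : 0 ≤ β := by linarith [hℓ _ zero_one_mem, hℓ_eq (0, 1)]
  refine ⟨β, hβ, fun p => ?_⟩
  rw [hℓ_eq, hℓ₀, hα]
  ring

theorem isExtreme_singleton_one_zero : IsExtreme ℝ S {((1 : ℝ), (0 : ℝ))} := by
  have hsegment : IsExposed ℝ S {p ∈ S | p.2 = 0} :=
    isExposed_setOf_eq_of_forall_le (ContinuousLinearMap.snd ℝ ℝ ℝ) fun _ => snd_nonneg_of_mem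
  have hendpoint : IsExposed ℝ {p ∈ S | p.2 = 0} {((1 : ℝ), (0 : ℝ))} := by
    refine mem_exposedPoints_iff_exposed_singleton.1
      ⟨⟨one_zero_mem, rfl⟩, ContinuousLinearMap.fst ℝ ℝ ℝ, ?_⟩
    rintro ⟨a, b⟩ hp
    rw [sep_snd_eq_zero] at hp
    obtain ⟨rfl, -, ha⟩ := hp
    exact ⟨ha, fun ha' => Prod.ext (le_antisymm ha ha') rfl⟩
  exact hsegment.isExtreme.trans hendpoint.isExtreme

theorem singleton_one_zero_ssubset_sep_snd_eq_zero :
    {((1 : ℝ), (0 : ℝ))} ⊂ {p ∈ S | p.2 = 0} := by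
  refine (Set.ssubset_iff_of_subset ?_).2 ⟨(-1, 0), ⟨neg_one_zero_mem, rfl⟩, by norm_num⟩
  rintro _ rfl
  exact ⟨one_zero_mem, rfl⟩

theorem not_exists_affine_sep_eq_singleton_one_zero :
    ¬∃ ℓ : ℝ × ℝ →ᵃ[ℝ] ℝ, (∀ p ∈ S, 0 ≤ ℓ p) ∧ {p ∈ S | ℓ p = 0} = {((1 : ℝ), (0 : ℝ))} := by
  rintro ⟨ℓ, hℓ, hzero⟩
  obtain ⟨c, -, hc⟩ := eq_mul_snd_of_nonneg hℓ (hzero.ge rfl).2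
  have hmem : ((-1 : ℝ), (0 : ℝ)) ∈ {p ∈ S | ℓ p = 0} := ⟨neg_one_zero_mem, by simp [hc]⟩
  rw [hzero] at hmem
  norm_num at hmem

end NonexposedFace

open NonexposedFace in
theorem one_zero_nonexposed_face :
    let S : Set (ℝ × ℝ) :=
      {p : ℝ × ℝ | (p.2 + 1 - p.1 ^ 2) ^ 2 ≤ 4 * p.2} ∪
        {p : ℝ × ℝ | 4 * p.2 ≤ (p.2 + 1 - p.1 ^ 2) ^ 2 ∧ 0 ≤ p.2 ∧ p.1 ^ 2 ≤ p.2 + 1}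
    -- {(1,0)} is a face of S
    IsExtreme ℝ S {((1 : ℝ), (0 : ℝ))} ∧
    -- every affine ℓ ≥ 0 on S vanishing at (1,0) is a nonnegative multiple of (a,b) ↦ b
    (∀ ℓ : (ℝ × ℝ) →ᵃ[ℝ] ℝ, (∀ p ∈ S, 0 ≤ ℓ p) → ℓ (1, 0) = 0 →
      ∃ c : ℝ, 0 ≤ c ∧ ∀ p : ℝ × ℝ, ℓ p = c * p.2) ∧
    -- the zero set of (a,b) ↦ b on S is the segment {(a,0) | -1 ≤ a ≤ 1},
    ({p ∈ S | p.2 = 0} = {p : ℝ × ℝ | p.2 = 0 ∧ -1 ≤ p.1 ∧ p.1 ≤ 1}) ∧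
    -- which strictly contains {(1,0)}
    {((1 : ℝ), (0 : ℝ))} ⊂ {p ∈ S | p.2 = 0} ∧
    -- hence {(1,0)} is not an exposed face
    ¬∃ ℓ : (ℝ × ℝ) →ᵃ[ℝ] ℝ, (∀ p ∈ S, 0 ≤ ℓ p) ∧
        {p ∈ S | ℓ p = 0} = {((1 : ℝ), (0 : ℝ))} := by
  exact ⟨isExtreme_singleton_one_zero, fun _ => eq_mul_snd_of_nonneg, sep_snd_eq_zero,
    singleton_one_zero_ssubset_sep_snd_eq_zero, not_exists_affine_sep_eq_singleton_one_zero⟩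
end
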